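/- Let σ = (σ_1, …, σ_n) be a tuple of density states (σ_i a density state on H^(i)) with consistent overlapping partial traces. Then there exists x ∈ (0, 1] such that the tuple (1−x)·I + x·σ belongs to C, where I = ((d_1/D)·1_{H^(1)}, …, (d_n/D)·1_{H^(n)}) is the tuple of reduced states of the maximally mixed state 1_H/D. -/

import Mathlib

open Matrix BigOperators
open scoped ComplexOrder

namespace Compat

noncomputable section

variable {n : ℕ} (d : Fin n → ℕ)

/-- The index type of the full tensor product `H = H_1 ⊗ ⋯ ⊗ H_n`,
where `H_i = ℂ^{d i}`; operators on `H` are matrices indexed by `Idx d`. -/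
abbrev Idx : Type := ∀ i, Fin (d i)

/-- The index type of the tensor product of the factors `H_i` with `i ∈ A`. -/
abbrev SubIdx (A : Finset (Fin n)) : Type := ∀ i : A, Fin (d i.1)

/-- Combine an assignment on `B` and one on `Bᶜ` into a full assignment. -/
def glue (B : Finset (Fin n)) (x : SubIdx d B) (z : SubIdx d Bᶜ) : Idx d :=
  fun i => if h : i ∈ B then x ⟨i, h⟩ else z ⟨i, Finset.mem_compl.mpr h⟩

/-- Partial trace keeping the factors in `B` (i.e. tracing out the factors in `Bᶜ`). -/
def reduce (B : Finset (Fin n)) (M : Matrix (Idx d) (Idx d) ℂ) :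
    Matrix (SubIdx d B) (SubIdx d B) ℂ :=
  fun x y => ∑ z : SubIdx d Bᶜ, M (glue d B x z) (glue d B y z)

/-- Place an operator acting on the factors in `B`, tensored with the identity
on the remaining factors, as an operator on the full space `H`. -/
def embed (B : Finset (Fin n)) (W : Matrix (SubIdx d B) (SubIdx d B) ℂ) :
    Matrix (Idx d) (Idx d) ℂ :=
  fun x y =>
    if ∀ i ∈ Bᶜ, x i = y i then W (fun i => x i.1) (fun i => y i.1) else 0

/-- Index type for `H^(i) = ⊗_{j ≠ i} H_j`. -/
abbrev RedIdx (i : Fin n) := SubIdx d ({i}ᶜ)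

/-- The space `O` of `n`-tuples of operators, the `i`-th acting on `H^(i)`. -/
abbrev Tuple := ∀ i : Fin n, Matrix (RedIdx d i) (RedIdx d i) ℂ

/-- Membership in (the Hermitian tuples space) `O`: every component is Hermitian. -/
def IsHermTuple (W : Tuple d) : Prop := ∀ i, (W i).IsHermitian

/-- A density state: positive semidefinite with trace one. -/
def IsDensity {m : Type*} [Fintype m] (M : Matrix m m ℂ) : Prop :=
  M.PosSemidef ∧ M.trace = 1

/-- The set `C`: a tuple `σ` lies in `C` iff there is a density state `ρ` on the
full space whose one-system partial traces are the `σ i`. -/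
def MemC (σ : Tuple d) : Prop :=
  ∃ ρ : Matrix (Idx d) (Idx d) ℂ, IsDensity ρ ∧ ∀ i, σ i = reduce d ({i}ᶜ) ρ

/-- The inner product `⟨⟨A,B⟩⟩ = Σ_i Tr(A_i B_i)` on `O` (a real number, since the
traces are real for Hermitian tuples). -/
def cwip (A B : Tuple d) : ℝ := (∑ i, ((A i) * (B i)).trace).re

/-- A compatibility witness: an element of `O` pairing nonnegatively with all of `C`. -/
def IsWitness (W : Tuple d) : Prop :=
  IsHermTuple d W ∧ ∀ ρ, MemC d ρ → 0 ≤ cwip d W ρ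

/-- `p(W) = Σ_i W_i ⊗ 1_i`. -/
def pW (W : Tuple d) : Matrix (Idx d) (Idx d) ℂ :=
  ∑ i, embed d ({i}ᶜ) (W i)

/-- `Δ(Z) = Σ_{A ⊊ N} (−1)^{|A|} (Tr_{N∖A} Z) ⊗ 1_{N∖A}`. -/
def Δop (Z : Matrix (Idx d) (Idx d) ℂ) : Matrix (Idx d) (Idx d) ℂ :=
  ∑ A ∈ Finset.univ.filter (fun A : Finset (Fin n) => A ≠ Finset.univ),
    ((-1 : ℂ) ^ A.card) • embed d A (reduce d A Z)

/-- The tensor product `T_1 ⊗ ⋯ ⊗ T_n` of one-system operators. -/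
def tensorAll (T : ∀ i, Matrix (Fin (d i)) (Fin (d i)) ℂ) :
    Matrix (Idx d) (Idx d) ℂ :=
  fun x y => ∏ i, T i (x i) (y i)

/-- Partial trace from the factors in `B` down to the factors in `B'` (for `B' ⊆ B`). -/
def reduceSub (B B' : Finset (Fin n)) (M : Matrix (SubIdx d B) (SubIdx d B) ℂ) :
    Matrix (SubIdx d B') (SubIdx d B') ℂ :=
  fun x y => ∑ z : SubIdx d (B \ B'),
    M (fun i => if h : i.1 ∈ B' then x ⟨i.1, h⟩ else z ⟨i.1, Finset.mem_sdiff.mpr ⟨i.2, h⟩⟩)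
      (fun i => if h : i.1 ∈ B' then y ⟨i.1, h⟩ else z ⟨i.1, Finset.mem_sdiff.mpr ⟨i.2, h⟩⟩)

/-- A tuple of subsystem states has consistent overlapping partial traces if
tracing the `j`-factor out of `σ_i` agrees with tracing the `i`-factor out of `σ_j`. -/
def HasConsistentTraces (σ : Tuple d) : Prop :=
  ∀ i j : Fin n, i ≠ j →
    reduceSub d ({i}ᶜ) ({i}ᶜ ∩ {j}ᶜ) (σ i) = reduceSub d ({j}ᶜ) ({i}ᶜ ∩ {j}ᶜ) (σ j)

/-- The tuple `I` of reduced states of the maximally mixed state `1_H / D`. -/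
def Itup : Tuple d :=
  fun i => ((d i : ℂ) / (∏ k, (d k : ℂ))) • (1 : Matrix (RedIdx d i) (RedIdx d i) ℂ)

/-- A positive tuple: all components positive semidefinite. -/
def PosTuple (σ : Tuple d) : Prop := ∀ i, (σ i).PosSemidef

/-- A normalized witness: `⟨⟨W, I⟩⟩ = 1` (equivalently `Tr p(W) = 1`). -/
def Normalized (W : Tuple d) : Prop := cwip d W (Itup d) = 1

/-- `W'` is finer than `W`. -/
def Finer (W' W : Tuple d) : Prop :=
  ∀ σ, PosTuple d σ → cwip d W σ < 0 → cwip d W' σ < 0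

/-- `λ(W, W') = inf_{σ ∈ D_W} |⟨⟨W',σ⟩⟩| / |⟨⟨W,σ⟩⟩|`. -/
def lam (W W' : Tuple d) : ℝ :=
  sInf {t | ∃ σ, PosTuple d σ ∧ cwip d W σ < 0 ∧ t = |cwip d W' σ| / |cwip d W σ|}

end
end Compat
namespace CompatAux
open Compat Finset

noncomputable section
variable {n : ℕ} (d : Fin n → ℕ)

lemma glue_mem (B : Finset (Fin n)) (x : SubIdx d B) (z : SubIdx d Bᶜ)
    {i : Fin n} (h : i ∈ B) : glue d B x z i = x ⟨i, h⟩ := dif_pos h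

lemma glue_not_mem (B : Finset (Fin n)) (x : SubIdx d B) (z : SubIdx d Bᶜ)
    {i : Fin n} (h : i ∉ B) : glue d B x z i = z ⟨i, Finset.mem_compl.mpr h⟩ := dif_neg h

def glueEquiv (B : Finset (Fin n)) : SubIdx d B × SubIdx d Bᶜ ≃ Idx d where
  toFun p := glue d B p.1 p.2
  invFun w := (fun i => w i.1, fun i => w i.1)
  left_inv p := by
    obtain ⟨x, z⟩ := p
    refine Prod.ext ?_ ?_ <;> funext i
    · exact glue_mem d B x z i.2
    · exact glue_not_mem d B x z (Finset.mem_compl.mp i.2)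
  right_inv w := by
    funext i
    by_cases h : i ∈ B
    · exact glue_mem d B _ _ h
    · exact glue_not_mem d B _ _ h

lemma trace_reduce (B : Finset (Fin n)) (M : Matrix (Idx d) (Idx d) ℂ) :
    (reduce d B M).trace = M.trace := by
  rw [Matrix.trace, Matrix.trace]
  simp only [Matrix.diag, reduce]
  rw [← Fintype.sum_prod_type']
  exact Fintype.sum_equiv (glueEquiv d B) _ _ (fun p => rfl)

end
end CompatAux
namespace CompatAux
open Compat Finset
noncomputable section
variable {n : ℕ} (d : Fin n → ℕ)

def splitEquiv {B'' B' B : Finset (Fin n)} (h1 : B'' ⊆ B') (h2 : B' ⊆ B) :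
    SubIdx d (B \ B'') ≃ SubIdx d (B' \ B'') × SubIdx d (B \ B') where
  toFun z := (fun i => z ⟨i.1, by
      have := Finset.mem_sdiff.mp i.2
      exact Finset.mem_sdiff.mpr ⟨h2 this.1, this.2⟩⟩,
    fun i => z ⟨i.1, by
      have := Finset.mem_sdiff.mp i.2
      exact Finset.mem_sdiff.mpr ⟨this.1, fun hc => this.2 (h1 hc)⟩⟩)
  invFun p := fun i =>
    if h : i.1 ∈ B' then p.1 ⟨i.1, Finset.mem_sdiff.mpr ⟨h, (Finset.mem_sdiff.mp i.2).2⟩⟩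
    else p.2 ⟨i.1, Finset.mem_sdiff.mpr ⟨(Finset.mem_sdiff.mp i.2).1, h⟩⟩
  left_inv z := by
    funext i
    by_cases h : i.1 ∈ B' <;> simp [h]
  right_inv p := by
    obtain ⟨w, u⟩ := p
    refine Prod.ext ?_ ?_ <;> funext i
    · have h : i.1 ∈ B' := (Finset.mem_sdiff.mp i.2).1
      simp [h]
    · have h : i.1 ∉ B' := (Finset.mem_sdiff.mp i.2).2
      simp [h]

lemma reduceSub_comp {B'' B' B : Finset (Fin n)} (h1 : B'' ⊆ B') (h2 : B' ⊆ B)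
    (M : Matrix (SubIdx d B) (SubIdx d B) ℂ) :
    reduceSub d B B'' M = reduceSub d B' B'' (reduceSub d B B' M) := by
  funext x y
  show _ = ∑ w : SubIdx d (B' \ B''), ∑ u : SubIdx d (B \ B'), _
  rw [← Fintype.sum_prod_type']
  unfold reduceSub
  refine Fintype.sum_equiv (splitEquiv d h1 h2) _ _ (fun z => ?_)
  congr 1 <;> (funext i; by_cases h : i.1 ∈ B'' <;> by_cases h' : i.1 ∈ B')
  · simp [h, h', splitEquiv]
  · exact absurd (h1 h) h'
  · simp [h, h', splitEquiv]
  · simp [h, h', splitEquiv]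
  · simp [h, h', splitEquiv]
  · exact absurd (h1 h) h'
  · simp [h, h', splitEquiv]
  · simp [h, h', splitEquiv]

lemma reduceSub_self (B : Finset (Fin n)) (M : Matrix (SubIdx d B) (SubIdx d B) ℂ) :
    reduceSub d B B M = M := by
  funext x y
  unfold reduceSub
  rw [Fintype.sum_eq_single (fun i => absurd (Finset.mem_sdiff.mp i.2).1
      (Finset.mem_sdiff.mp i.2).2 : SubIdx d (B \ B))]
  · congr 1 <;> (funext i; simp [i.2])
  · intro z hz
    exact absurd (funext fun i => absurd (Finset.mem_sdiff.mp i.2).1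
      (Finset.mem_sdiff.mp i.2).2) hz

end
end CompatAux
namespace CompatAux
open Compat Finset
noncomputable section
variable {n : ℕ} (d : Fin n → ℕ)

lemma consist {σ : Tuple d} (hcons : HasConsistentTraces d σ)
    {B : Finset (Fin n)} {i j : Fin n} (hi : i ∉ B) (hj : j ∉ B) :
    reduceSub d ({i}ᶜ) B (σ i) = reduceSub d ({j}ᶜ) B (σ j) := by
  rcases eq_or_ne i j with rfl | hij
  · rfl
  have hBi : B ⊆ ({i}ᶜ ∩ {j}ᶜ) := by
    intro k hk
    simp only [Finset.mem_inter, Finset.mem_compl, Finset.mem_singleton]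
    exact ⟨fun h => hi (h ▸ hk), fun h => hj (h ▸ hk)⟩
  have h2i : ({i}ᶜ ∩ {j}ᶜ : Finset (Fin n)) ⊆ {i}ᶜ := Finset.inter_subset_left
  have h2j : ({i}ᶜ ∩ {j}ᶜ : Finset (Fin n)) ⊆ {j}ᶜ := Finset.inter_subset_right
  rw [reduceSub_comp d hBi h2i, reduceSub_comp d hBi h2j, hcons i j hij]

/-- The marginal of the family on the subsystem `B`. -/
def mu (σ : Tuple d) (B : Finset (Fin n)) : Matrix (SubIdx d B) (SubIdx d B) ℂ :=
  if h : Bᶜ.Nonempty then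
    reduceSub d ({h.choose}ᶜ) B (σ h.choose)
  else 0

lemma mu_spec {σ : Tuple d} (hcons : HasConsistentTraces d σ)
    {B : Finset (Fin n)} {i : Fin n} (hi : i ∉ B) :
    mu d σ B = reduceSub d ({i}ᶜ) B (σ i) := by
  have h : Bᶜ.Nonempty := ⟨i, Finset.mem_compl.mpr hi⟩
  rw [mu, dif_pos h]
  exact consist d hcons (Finset.mem_compl.mp h.choose_spec) hi

lemma mu_self {σ : Tuple d} (hcons : HasConsistentTraces d σ) (i : Fin n) :
    mu d σ ({i}ᶜ) = σ i := by
  rw [mu_spec d hcons (Finset.notMem_compl.mpr (Finset.mem_singleton_self i)),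
    reduceSub_self]

lemma mu_descent {σ : Tuple d} (hcons : HasConsistentTraces d σ)
    {B : Finset (Fin n)} {i : Fin n} (hi : i ∉ B) (hne : insert i B ≠ Finset.univ) :
    reduceSub d (insert i B) B (mu d σ (insert i B)) = mu d σ B := by
  have hc : ((insert i B)ᶜ).Nonempty :=
    (Finset.compl_ne_univ_iff_nonempty _).mp (by rwa [compl_compl])
  obtain ⟨j, hj⟩ := hc
  have hj' : j ∉ insert i B := Finset.mem_compl.mp hj
  have hjB : j ∉ B := fun h => hj' (Finset.mem_insert_of_mem h)
  have hsub1 : B ⊆ insert i B := Finset.subset_insert i B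
  have hsub2 : insert i B ⊆ ({j}ᶜ) := fun k hk =>
    Finset.mem_compl.mpr (fun hc2 => hj' ((Finset.mem_singleton.mp hc2) ▸ hk))
  rw [mu_spec d hcons hj', ← reduceSub_comp d hsub1 hsub2, mu_spec d hcons hjB]

end
end CompatAux
namespace CompatAux
open Compat Finset
noncomputable section
variable {n : ℕ} (d : Fin n → ℕ)

/-- Restriction of an assignment on `{i}ᶜ` to `B` (for `i ∉ B`). -/
def resB {B : Finset (Fin n)} {i : Fin n} (hi : i ∉ B) (x : RedIdx d i) : SubIdx d B :=
  fun j => x ⟨j.1, Finset.mem_compl.mpr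
    (fun hc => hi ((Finset.mem_singleton.mp hc) ▸ j.2))⟩

/-- Agreement of two assignments on `{i}ᶜ` outside of `B`. -/
def Agr {B : Finset (Fin n)} {i : Fin n} (_ : i ∉ B) (x y : RedIdx d i) : Prop :=
  ∀ (k : Fin n) (hk : k ∈ ({i}ᶜ : Finset (Fin n))), k ∉ B → x ⟨k, hk⟩ = y ⟨k, hk⟩

def subIdxEquiv {A A' : Finset (Fin n)} (h : ∀ k, k ∈ A ↔ k ∈ A') :
    SubIdx d A ≃ SubIdx d A' where
  toFun z := fun j => z ⟨j.1, (h j.1).mpr j.2⟩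
  invFun z := fun j => z ⟨j.1, (h j.1).mp j.2⟩
  left_inv z := rfl
  right_inv z := rfl

lemma card_subIdx_compl_compl (i : Fin n) :
    Fintype.card (SubIdx d ((({i}ᶜ : Finset (Fin n)))ᶜ)) = d i := by
  rw [Fintype.card_pi]
  rw [Finset.prod_coe_sort (({i}ᶜ : Finset (Fin n))ᶜ) (fun j => Fintype.card (Fin (d j)))]
  simp [compl_compl]

open scoped Classical in
lemma reduce_embed_insert {B : Finset (Fin n)} {i : Fin n} (hi : i ∉ B)
    (W : Matrix (SubIdx d (insert i B)) (SubIdx d (insert i B)) ℂ)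
    (x y : RedIdx d i) :
    reduce d ({i}ᶜ) (embed d (insert i B) W) x y =
      if Agr d hi x y then
        reduceSub d (insert i B) B W (resB d hi x) (resB d hi y) else 0 := by
  have hmem : ∀ k : Fin n, k ∈ ((insert i B : Finset (Fin n)))ᶜ ↔
      (k ∈ ({i}ᶜ : Finset (Fin n)) ∧ k ∉ B) := by
    intro k
    simp [Finset.mem_compl, Finset.mem_insert, not_or]
  have hcond : ∀ z : SubIdx d (({i}ᶜ : Finset (Fin n))ᶜ),
      ((∀ k ∈ ((insert i B : Finset (Fin n)))ᶜ,
        glue d ({i}ᶜ) x z k = glue d ({i}ᶜ) y z k) ↔ Agr d hi x y) := by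
    intro z
    constructor
    · intro h k hk hkB
      have h2 := h k ((hmem k).mpr ⟨hk, hkB⟩)
      rwa [glue_mem d _ x z hk, glue_mem d _ y z hk] at h2
    · intro hP k hk
      obtain ⟨hk1, hk2⟩ := (hmem k).mp hk
      rw [glue_mem d _ x z hk1, glue_mem d _ y z hk1]
      exact hP k hk1 hk2
  by_cases hP : Agr d hi x y
  · rw [if_pos hP]
    show ∑ z : SubIdx d (({i}ᶜ : Finset (Fin n))ᶜ), _ = _
    have hAA' : ∀ k : Fin n, k ∈ (({i}ᶜ : Finset (Fin n)))ᶜ ↔ k ∈ insert i B \ B := by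
      intro k
      simp only [compl_compl, Finset.mem_singleton, Finset.mem_sdiff, Finset.mem_insert]
      constructor
      · rintro rfl; exact ⟨Or.inl rfl, hi⟩
      · rintro ⟨h1 | h1, h2⟩
        exacts [h1, absurd h1 h2]
    refine Fintype.sum_equiv (subIdxEquiv d hAA') _ _ (fun z => ?_)
    show (if _ then W _ _ else 0) = W _ _
    rw [if_pos ((hcond z).mpr hP)]
    congr 1 <;> · funext j
                  by_cases hj : j.1 ∈ B
                  · have hj' : j.1 ∈ ({i}ᶜ : Finset (Fin n)) := Finset.mem_compl.mpr
                      (fun hc => hi ((Finset.mem_singleton.mp hc) ▸ hj))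
                    show glue d ({i}ᶜ) _ z j.1 = _
                    rw [glue_mem d _ _ z hj']
                    simp [reduceSub, hj, resB]
                  · have hji : j.1 = i := by
                      rcases Finset.mem_insert.mp j.2 with h | h
                      · exact h
                      · exact absurd h hj
                    have hj' : j.1 ∉ ({i}ᶜ : Finset (Fin n)) := by
                      rw [hji]; simp
                    show glue d ({i}ᶜ) _ z j.1 = _
                    rw [glue_not_mem d _ _ z hj']
                    simp [reduceSub, hj, subIdxEquiv]
  · rw [if_neg hP]
    apply Finset.sum_eq_zero
    intro z _
    exact if_neg (fun hc => hP ((hcond z).mp hc))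

end
end CompatAux
namespace CompatAux
open Compat Finset
noncomputable section
variable {n : ℕ} (d : Fin n → ℕ)

open scoped Classical in
lemma reduce_embed_noti {B : Finset (Fin n)} {i : Fin n} (hi : i ∉ B)
    (V : Matrix (SubIdx d B) (SubIdx d B) ℂ) (x y : RedIdx d i) :
    reduce d ({i}ᶜ) (embed d B V) x y =
      (d i : ℂ) * (if Agr d hi x y then V (resB d hi x) (resB d hi y) else 0) := by
  have hterm : ∀ z : SubIdx d (({i}ᶜ : Finset (Fin n))ᶜ),
      embed d B V (glue d ({i}ᶜ) x z) (glue d ({i}ᶜ) y z) =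
        (if Agr d hi x y then V (resB d hi x) (resB d hi y) else 0) := by
    intro z
    show (if _ then _ else _) = _
    have hcond : (∀ k ∈ (Bᶜ : Finset (Fin n)),
        glue d ({i}ᶜ) x z k = glue d ({i}ᶜ) y z k) ↔ Agr d hi x y := by
      constructor
      · intro h k hk hkB
        have h2 := h k (Finset.mem_compl.mpr hkB)
        rwa [glue_mem d _ x z hk, glue_mem d _ y z hk] at h2
      · intro hP k hk
        by_cases hk1 : k ∈ ({i}ᶜ : Finset (Fin n))
        · rw [glue_mem d _ x z hk1, glue_mem d _ y z hk1]
          exact hP k hk1 (Finset.mem_compl.mp hk)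
        · rw [glue_not_mem d _ x z hk1, glue_not_mem d _ y z hk1]
    by_cases hP : Agr d hi x y
    · rw [if_pos (hcond.mpr hP), if_pos hP]
      congr 1 <;> · funext j
                    have hj' : j.1 ∈ ({i}ᶜ : Finset (Fin n)) := Finset.mem_compl.mpr
                      (fun hc => hi ((Finset.mem_singleton.mp hc) ▸ j.2))
                    show glue d ({i}ᶜ) _ z j.1 = _
                    rw [glue_mem d _ _ z hj']
                    rfl
    · rw [if_neg (fun hc => hP (hcond.mp hc)), if_neg hP]
  show ∑ z : SubIdx d (({i}ᶜ : Finset (Fin n))ᶜ), _ = _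
  rw [Finset.sum_congr rfl (fun z _ => hterm z), Finset.sum_const, Finset.card_univ,
    card_subIdx_compl_compl, nsmul_eq_mul]

lemma reduce_embed_top (i : Fin n) (W : Matrix (RedIdx d i) (RedIdx d i) ℂ) :
    reduce d ({i}ᶜ) (embed d ({i}ᶜ) W) = (d i : ℂ) • W := by
  funext x y
  have hterm : ∀ z : SubIdx d (({i}ᶜ : Finset (Fin n))ᶜ),
      embed d ({i}ᶜ) W (glue d ({i}ᶜ) x z) (glue d ({i}ᶜ) y z) = W x y := by
    intro z
    show (if _ then _ else _) = _
    rw [if_pos]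
    · congr 1 <;> · funext j
                    show glue d ({i}ᶜ) _ z j.1 = _
                    rw [glue_mem d _ _ z j.2]
    · intro k hk
      rw [glue_not_mem d _ x z (Finset.mem_compl.mp hk),
        glue_not_mem d _ y z (Finset.mem_compl.mp hk)]
  show ∑ z : SubIdx d (({i}ᶜ : Finset (Fin n))ᶜ), _ = _
  rw [Finset.sum_congr rfl (fun z _ => hterm z), Finset.sum_const, Finset.card_univ,
    card_subIdx_compl_compl, nsmul_eq_mul]
  rfl

lemma reduce_sum {α : Type*} (s : Finset α) (B : Finset (Fin n))
    (f : α → Matrix (Idx d) (Idx d) ℂ) :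
    reduce d B (∑ j ∈ s, f j) = ∑ j ∈ s, reduce d B (f j) := by
  funext x y
  simp only [reduce, Matrix.sum_apply]
  exact Finset.sum_comm

lemma reduce_smul (c : ℂ) (B : Finset (Fin n)) (M : Matrix (Idx d) (Idx d) ℂ) :
    reduce d B (c • M) = c • reduce d B M := by
  funext x y
  simp only [reduce, Matrix.smul_apply, smul_eq_mul, Finset.mul_sum]

lemma reduce_one (i : Fin n) :
    reduce d ({i}ᶜ) (1 : Matrix (Idx d) (Idx d) ℂ) =
      (d i : ℂ) • (1 : Matrix (RedIdx d i) (RedIdx d i) ℂ) := by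
  funext x y
  show ∑ z : SubIdx d (({i}ᶜ : Finset (Fin n))ᶜ), _ = _
  have hterm : ∀ z : SubIdx d (({i}ᶜ : Finset (Fin n))ᶜ),
      (1 : Matrix (Idx d) (Idx d) ℂ) (glue d ({i}ᶜ) x z) (glue d ({i}ᶜ) y z) =
        (1 : Matrix (RedIdx d i) (RedIdx d i) ℂ) x y := by
    intro z
    rw [Matrix.one_apply, Matrix.one_apply]
    congr 1
    simp only [eq_iff_iff]
    constructor
    · intro h
      funext j
      have := congrFun h j.1
      rwa [glue_mem d _ x z j.2, glue_mem d _ y z j.2] at this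
    · rintro rfl; rfl
  rw [Finset.sum_congr rfl (fun z _ => hterm z), Finset.sum_const, Finset.card_univ,
    card_subIdx_compl_compl, nsmul_eq_mul]
  rfl

end
end CompatAux
namespace CompatAux
open Compat Finset
noncomputable section
variable {n : ℕ} (d : Fin n → ℕ)

def coef (B : Finset (Fin n)) : ℝ :=
  ((-1 : ℝ) ^ (n - 1) * (-1 : ℝ) ^ B.card) / ∏ k ∈ Bᶜ, (d k : ℝ)

def Zmat (σ : Tuple d) : Matrix (Idx d) (Idx d) ℂ :=
  ∑ B ∈ Finset.univ.filter (fun B : Finset (Fin n) => B ≠ Finset.univ),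
    (coef d B : ℂ) • embed d B (mu d σ B)

lemma prod_compl_singleton (i : Fin n) :
    ∏ k ∈ (({i}ᶜ : Finset (Fin n)))ᶜ, (d k : ℝ) = (d i : ℝ) := by
  rw [compl_compl]; simp

lemma coef_compl_singleton (i : Fin n) : coef d (({i}ᶜ : Finset (Fin n))) = 1 / (d i : ℝ) := by
  rw [coef, prod_compl_singleton]
  have hcard : (({i}ᶜ : Finset (Fin n))).card = n - 1 := by
    rw [Finset.card_compl]; simp
  rw [hcard, ← pow_add, Even.neg_one_pow ⟨n - 1, rfl⟩]

lemma coef_insert (hd : ∀ i, 1 ≤ d i) {B : Finset (Fin n)} {i : Fin n} (hi : i ∉ B) :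
    coef d (insert i B) = -(d i : ℝ) * coef d B := by
  have hiBc : i ∈ (Bᶜ : Finset (Fin n)) := Finset.mem_compl.mpr hi
  have hprod : ∏ k ∈ (Bᶜ : Finset (Fin n)), (d k : ℝ) =
      (d i : ℝ) * ∏ k ∈ ((insert i B : Finset (Fin n)))ᶜ, (d k : ℝ) := by
    rw [Finset.compl_insert, ← Finset.mul_prod_erase _ _ hiBc]
  have hdne : (d i : ℝ) ≠ 0 := by
    have := hd i; positivity
  have hP : ∏ k ∈ ((insert i B : Finset (Fin n)))ᶜ, (d k : ℝ) ≠ 0 := by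
    rw [Finset.prod_ne_zero_iff]
    intro k _
    have := hd k
    positivity
  rw [coef, coef, Finset.card_insert_of_notMem hi, pow_succ, hprod]
  rw [neg_mul, ← mul_div_assoc, mul_div_mul_left _ _ hdne, ← neg_div]
  congr 1
  ring

lemma reduce_Zmat (hd : ∀ i, 1 ≤ d i) {σ : Tuple d} (hcons : HasConsistentTraces d σ)
    (i : Fin n) : reduce d ({i}ᶜ) (Zmat d σ) = σ i := by
  classical
  set f : Finset (Fin n) → Matrix (RedIdx d i) (RedIdx d i) ℂ :=
    fun B => (coef d B : ℂ) • reduce d ({i}ᶜ) (embed d B (mu d σ B)) with hf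
  have hred : reduce d ({i}ᶜ) (Zmat d σ) =
      ∑ B ∈ Finset.univ.filter (fun B : Finset (Fin n) => B ≠ Finset.univ), f B := by
    rw [Zmat, reduce_sum]
    exact Finset.sum_congr rfl (fun B _ => reduce_smul d _ _ _)
  rw [hred]
  set S := Finset.univ.filter (fun B : Finset (Fin n) => B ≠ Finset.univ) with hS
  set T := (({i}ᶜ : Finset (Fin n))).powerset with hT
  have hsplit := Finset.sum_filter_add_sum_filter_not S (fun B => i ∈ B) f
  have hnotmem : S.filter (fun B => i ∉ B) = T := by
    ext B
    simp only [hS, hT, Finset.mem_filter, Finset.mem_univ, true_and,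
      Finset.mem_powerset]
    constructor
    · intro ⟨_, h2⟩
      intro k hk
      exact Finset.mem_compl.mpr (fun hc => h2 ((Finset.mem_singleton.mp hc) ▸ hk))
    · intro h
      have hiB : i ∉ B := fun hc => by simpa using Finset.mem_compl.mp (h hc)
      exact ⟨fun hc => hiB (hc ▸ Finset.mem_univ i), hiB⟩
  have hinsne : ∀ B ∈ T.erase (({i}ᶜ : Finset (Fin n))),
      i ∉ B ∧ insert i B ≠ Finset.univ := by
    intro B hB
    obtain ⟨hBne, hBT⟩ := Finset.mem_erase.mp hB
    have hBsub : B ⊆ ({i}ᶜ : Finset (Fin n)) := Finset.mem_powerset.mp hBT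
    have hiB : i ∉ B := fun hc => by simpa using Finset.mem_compl.mp (hBsub hc)
    refine ⟨hiB, fun hc => hBne ?_⟩
    have : B = (insert i B).erase i := (Finset.erase_insert hiB).symm
    rw [this, hc]
    ext k
    simp [Finset.mem_erase, eq_comm]
  have hmem_sum : ∑ B ∈ S.filter (fun B => i ∈ B), f B =
      ∑ B ∈ T.erase (({i}ᶜ : Finset (Fin n))), f (insert i B) := by
    refine Finset.sum_nbij' (fun B => B.erase i) (fun B => insert i B) ?_ ?_ ?_ ?_ ?_
    · intro B hB
      simp only [hS, Finset.mem_filter, Finset.mem_univ, true_and] at hB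
      obtain ⟨hBne, hiB⟩ := hB
      refine Finset.mem_erase.mpr ⟨fun hc => hBne ?_, Finset.mem_powerset.mpr ?_⟩
      · replace hc : B.erase i = ({i}ᶜ : Finset (Fin n)) := hc
        have : B = insert i (B.erase i) := (Finset.insert_erase hiB).symm
        rw [this, hc]
        ext k
        by_cases hk : k = i <;> simp [hk]
      · intro k hk
        exact Finset.mem_compl.mpr (fun hc =>
          (Finset.mem_erase.mp hk).1 (Finset.mem_singleton.mp hc))
    · intro B hB
      obtain ⟨hiB, hins⟩ := hinsne B hB
      simp only [hS, Finset.mem_filter, Finset.mem_univ, true_and]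
      exact ⟨hins, Finset.mem_insert_self i B⟩
    · intro B hB
      simp only [hS, Finset.mem_filter, Finset.mem_univ, true_and] at hB
      exact Finset.insert_erase hB.2
    · intro B hB
      exact Finset.erase_insert (hinsne B hB).1
    · intro B hB
      simp only [hS, Finset.mem_filter, Finset.mem_univ, true_and] at hB
      rw [Finset.insert_erase hB.2]
  have hpair : ∀ B ∈ T.erase (({i}ᶜ : Finset (Fin n))), f (insert i B) + f B = 0 := by
    intro B hB
    obtain ⟨hiB, hins⟩ := hinsne B hB
    have hkey : reduce d ({i}ᶜ) (embed d B (mu d σ B)) =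
        (d i : ℂ) • reduce d ({i}ᶜ) (embed d (insert i B) (mu d σ (insert i B))) := by
      funext x y
      rw [Matrix.smul_apply, reduce_embed_noti d hiB, reduce_embed_insert d hiB,
        mu_descent d hcons hiB hins]
      rw [smul_eq_mul]
    rw [hf]
    simp only []
    rw [hkey, coef_insert d hd hiB, smul_smul]
    push_cast
    rw [← add_smul]
    convert zero_smul ℂ _
    ring
  have htop : f (({i}ᶜ : Finset (Fin n))) = σ i := by
    rw [hf]
    simp only []
    rw [reduce_embed_top, mu_self d hcons, coef_compl_singleton, smul_smul]
    have hdne : (d i : ℂ) ≠ 0 := by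
      have := hd i
      exact_mod_cast Nat.cast_ne_zero.mpr (by omega)
    push_cast
    rw [one_div, inv_mul_cancel₀ hdne, one_smul]
  have hTmem : (({i}ᶜ : Finset (Fin n))) ∈ T := Finset.mem_powerset.mpr (le_refl _)
  calc ∑ B ∈ S, f B
      = ∑ B ∈ S.filter (fun B => i ∈ B), f B + ∑ B ∈ S.filter (fun B => i ∉ B), f B :=
        hsplit.symm
    _ = ∑ B ∈ T.erase (({i}ᶜ : Finset (Fin n))), f (insert i B) + ∑ B ∈ T, f B := by
        rw [hmem_sum, hnotmem]
    _ = ∑ B ∈ T.erase (({i}ᶜ : Finset (Fin n))), f (insert i B) +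
        (f (({i}ᶜ : Finset (Fin n))) + ∑ B ∈ T.erase (({i}ᶜ : Finset (Fin n))), f B) := by
        rw [Finset.add_sum_erase _ f hTmem]
    _ = f (({i}ᶜ : Finset (Fin n))) +
        ∑ B ∈ T.erase (({i}ᶜ : Finset (Fin n))), (f (insert i B) + f B) := by
        rw [Finset.sum_add_distrib]
        abel
    _ = σ i := by
        rw [Finset.sum_congr rfl hpair, htop]
        simp
end
end CompatAux
namespace CompatAux
open Compat Finset
noncomputable section
variable {n : ℕ} (d : Fin n → ℕ)

lemma reduceSub_isHermitian {B B' : Finset (Fin n)} {M : Matrix (SubIdx d B) (SubIdx d B) ℂ}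
    (hM : M.IsHermitian) : (reduceSub d B B' M).IsHermitian := by
  unfold Matrix.IsHermitian
  funext x y
  rw [Matrix.conjTranspose_apply, reduceSub, reduceSub, star_sum]
  refine Finset.sum_congr rfl (fun z _ => ?_)
  rw [← Matrix.conjTranspose_apply, hM]

lemma embed_isHermitian {B : Finset (Fin n)} {W : Matrix (SubIdx d B) (SubIdx d B) ℂ}
    (hW : W.IsHermitian) : (embed d B W).IsHermitian := by
  unfold Matrix.IsHermitian
  funext x y
  rw [Matrix.conjTranspose_apply, embed, embed]
  by_cases h : ∀ k ∈ (Bᶜ : Finset (Fin n)), x k = y k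
  · rw [if_pos h, if_pos (fun k hk => (h k hk).symm), ← Matrix.conjTranspose_apply, hW]
  · rw [if_neg h, if_neg (fun hc => h (fun k hk => (hc k hk).symm)), star_zero]

lemma mu_isHermitian {σ : Tuple d} (hσ : ∀ i, (σ i).IsHermitian) (B : Finset (Fin n)) :
    (mu d σ B).IsHermitian := by
  rw [mu]
  split
  · exact reduceSub_isHermitian d (hσ _)
  · exact Matrix.isHermitian_zero

lemma Zmat_isHermitian {σ : Tuple d} (hσ : ∀ i, (σ i).IsHermitian) :
    (Zmat d σ).IsHermitian := by
  unfold Matrix.IsHermitian Zmat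
  rw [Matrix.conjTranspose_sum]
  refine Finset.sum_congr rfl (fun B _ => ?_)
  rw [Matrix.conjTranspose_smul, Complex.star_def, Complex.conj_ofReal,
    embed_isHermitian d (mu_isHermitian d hσ B)]

lemma reduce_add (B : Finset (Fin n)) (M N : Matrix (Idx d) (Idx d) ℂ) :
    reduce d B (M + N) = reduce d B M + reduce d B N := by
  funext x y
  simp [reduce, Finset.sum_add_distrib]

end
end CompatAux
open Matrix BigOperators
open scoped ComplexOrder

/-- for a tuple of density states with consistent overlapping partial
traces, some convex combination `(1−x)·I + x·σ` with `x ∈ (0,1]` lies in `C`. -/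
theorem exists_mix_memC {n : ℕ} (d : Fin n → ℕ) (hn : 2 ≤ n) (hd : ∀ i, 1 ≤ d i)
    (σ : Compat.Tuple d) (hden : ∀ i, Compat.IsDensity (σ i))
    (hcons : Compat.HasConsistentTraces d σ) :
    ∃ x : ℝ, x ∈ Set.Ioc (0 : ℝ) 1 ∧
      Compat.MemC d (fun i => (1 - x) • Compat.Itup d i + x • σ i) := by
  classical
  have hi0 : 0 < n := by omega
  set i0 : Fin n := ⟨0, hi0⟩ with hi0def
  set Z := CompatAux.Zmat d σ with hZdef
  have hσH : ∀ i, (σ i).IsHermitian := fun i => (hden i).1.1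
  have hZH : Z.IsHermitian := CompatAux.Zmat_isHermitian d hσH
  have hmarg : ∀ i, Compat.reduce d ({i}ᶜ) Z = σ i :=
    fun i => CompatAux.reduce_Zmat d hd hcons i
  have hZtr : Z.trace = 1 := by
    rw [← CompatAux.trace_reduce d ({i0}ᶜ) Z, hmarg]
    exact (hden i0).2
  set C : ℝ := ∑ p : Compat.Idx d, ∑ q : Compat.Idx d, ‖Z p q‖ with hCdef
  have hC0 : 0 ≤ C := Finset.sum_nonneg fun p _ => Finset.sum_nonneg fun q _ =>
    norm_nonneg _
  set D : ℝ := ∏ k, (d k : ℝ) with hDdef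
  have hD0 : 0 < D := Finset.prod_pos fun k _ => by
    have := hd k; positivity
  have hDne : D ≠ 0 := ne_of_gt hD0
  have hdenpos : 0 < 1 + D * C := by positivity
  set x : ℝ := 1 / (1 + D * C) with hxdef
  have hx0 : 0 < x := by positivity
  have hx1 : x ≤ 1 := by
    rw [hxdef, div_le_one hdenpos]
    nlinarith
  have hxC : (1 - x) / D = x * C := by
    rw [hxdef]
    field_simp
    ring
  refine ⟨x, ⟨hx0, hx1⟩, ?_⟩
  set ρ : Matrix (Compat.Idx d) (Compat.Idx d) ℂ :=
    (((1 - x) / D : ℝ) : ℂ) • (1 : Matrix (Compat.Idx d) (Compat.Idx d) ℂ)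
      + ((x : ℝ) : ℂ) • Z with hρdef
  have hsmul_real : ∀ {m : Type _} (r : ℝ) (A : Matrix m m ℂ),
      r • A = ((r : ℝ) : ℂ) • A := fun r A => by
    funext p q
    simp [Matrix.smul_apply, Complex.real_smul]
  -- Hermitian
  have hρH : ρ.IsHermitian := by
    unfold Matrix.IsHermitian
    rw [hρdef, Matrix.conjTranspose_add, Matrix.conjTranspose_smul,
      Matrix.conjTranspose_smul, Matrix.conjTranspose_one]
    simp only [Complex.star_def, Complex.conj_ofReal]
    rw [show Zᴴ = Z from hZH]
  -- PSD
  have hρPSD : ρ.PosSemidef := by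
    refine Matrix.PosSemidef.of_dotProduct_mulVec_nonneg hρH (fun v => ?_)
    set S : ℝ := ∑ p, Complex.normSq (v p) with hSdef
    have hS0 : 0 ≤ S := Finset.sum_nonneg fun p _ => Complex.normSq_nonneg _
    have hvS : ∀ p, ‖v p‖ ^ 2 ≤ S := by
      intro p
      rw [← Complex.normSq_eq_norm_sq]
      exact Finset.single_le_sum (f := fun p => Complex.normSq (v p))
        (fun q _ => Complex.normSq_nonneg _) (Finset.mem_univ p)
    set q : ℂ := dotProduct (star v) (Z *ᵥ v) with hqdef
    have hqstar : star q = q := by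
      nth_rewrite 1 [hqdef]
      rw [star_dotProduct, star_star, star_mulVec, hZH, ← Matrix.dotProduct_mulVec]
    have hqre : (q.re : ℂ) = q := Complex.conj_eq_iff_re.mp hqstar
    have hqabs : ‖q‖ ≤ C * S := by
      rw [hqdef, dotProduct]
      refine le_trans (norm_sum_le _ _) ?_
      rw [hCdef, Finset.sum_mul]
      refine Finset.sum_le_sum fun p _ => ?_
      rw [Matrix.mulVec, dotProduct, Finset.mul_sum]
      refine le_trans (norm_sum_le _ _) ?_
      rw [Finset.sum_mul]
      refine Finset.sum_le_sum fun r _ => ?_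
      have habs : ‖star v p * (Z p r * v r)‖ =
          ‖v p‖ * (‖Z p r‖ * ‖v r‖) := by
        simp [norm_mul]
      have hab : ‖v p‖ * ‖v r‖ ≤ S := by
        nlinarith [hvS p, hvS r, norm_nonneg (v p), norm_nonneg (v r)]
      rw [habs, mul_left_comm]
      exact mul_le_mul_of_nonneg_left hab (norm_nonneg _)
    have hqrebound : -(C * S) ≤ q.re := by
      have := Complex.abs_re_le_norm q
      have h2 := abs_le.mp (le_trans this hqabs)
      linarith [h2.1]
    have hvv : dotProduct (star v) v = ((S : ℝ) : ℂ) := by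
      rw [dotProduct, hSdef]
      push_cast
      refine Finset.sum_congr rfl fun p _ => ?_
      rw [Pi.star_apply, Complex.star_def]
      exact Complex.normSq_eq_conj_mul_self.symm
    have hdot : dotProduct (star v) (ρ *ᵥ v) =
        (((1 - x) / D : ℝ) : ℂ) * ((S : ℝ) : ℂ) + ((x : ℝ) : ℂ) * q := by
      rw [hρdef, Matrix.add_mulVec, Matrix.smul_mulVec, Matrix.smul_mulVec,
        Matrix.one_mulVec, dotProduct_add, dotProduct_smul, dotProduct_smul,
        smul_eq_mul, smul_eq_mul, hvv, ← hqdef]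
    rw [hdot, hxC, ← hqre]
    have heq : ((x * C : ℝ) : ℂ) * ((S : ℝ) : ℂ) + ((x : ℝ) : ℂ) * ((q.re : ℝ) : ℂ)
        = ((x * C * S + x * q.re : ℝ) : ℂ) := by push_cast; ring
    rw [heq, Complex.zero_le_real]
    have h7 : 0 ≤ C * S + q.re := by linarith
    nlinarith [mul_nonneg hx0.le h7]
  -- trace
  have hρtr : ρ.trace = 1 := by
    rw [hρdef, Matrix.trace_add, Matrix.trace_smul, Matrix.trace_smul, hZtr,
      Matrix.trace_one]
    have hcard : (Fintype.card (Compat.Idx d) : ℂ) = ((D : ℝ) : ℂ) := by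
      rw [Fintype.card_pi, hDdef]
      push_cast
      simp
    rw [smul_eq_mul, smul_eq_mul, hcard, mul_one]
    rw [← Complex.ofReal_mul, div_mul_cancel₀ _ hDne]
    push_cast
    ring
  refine ⟨ρ, ⟨hρPSD, hρtr⟩, fun i => ?_⟩
  -- marginals
  simp only []
  rw [hρdef, CompatAux.reduce_add, CompatAux.reduce_smul, CompatAux.reduce_smul,
    CompatAux.reduce_one, hmarg]
  have hItup : Compat.Itup d i =
      ((d i : ℂ) / ((D : ℝ) : ℂ)) • (1 : Matrix (Compat.RedIdx d i) (Compat.RedIdx d i) ℂ) := by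
    rw [Compat.Itup, hDdef]
    push_cast
    rfl
  rw [hItup, hsmul_real (1 - x) _, hsmul_real x (σ i), smul_smul, smul_smul]
  congr 2
  have hDCne : ((D : ℝ) : ℂ) ≠ 0 := by
    exact_mod_cast Complex.ofReal_ne_zero.mpr hDne
  push_cast
  field_simp
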